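/- If the null p-values are mutually independent, independent of the non-null p-values, and each satisfies P(p_j ≤ t) ≤ t for all t ∈ [0,1], then the Benjamini–Hochberg step-up procedure with thresholds λ_j = αj/m controls the false discovery rate E[V/(R∨1)] at level at most (m₀/m)·α. -/

import Mathlib

open MeasureTheory ProbabilityTheory

/-- Step-up index: `j* = sup {j : 1 ≤ j ≤ m, q_(j) ≤ λ_j}` (with `j* = 0` if empty),
where `q_(j)` is the `j`-th order statistic of `q`. -/
noncomputable def stepUpIndex {m : ℕ} (q : Fin m → ℝ) (lam : ℕ → ℝ) : ℕ :=
  sSup {j | ∃ h : j - 1 < m, 0 < j ∧ q (Tuple.sort q ⟨j - 1, h⟩) ≤ lam j}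

/-- Index `i` is rejected by the step-up procedure iff its sorted position is below `j*`. -/
noncomputable def stepUpRejects {m : ℕ} (q : Fin m → ℝ) (lam : ℕ → ℝ) (i : Fin m) : Prop :=
  ∃ k : Fin m, Tuple.sort q k = i ∧ (k : ℕ) < stepUpIndex q lam

/-- Index type packaging each null p-value separately (`some j`) together with the whole
vector of non-null p-values (`none`); mutual independence of this family states that the
null p-values are mutually independent and independent of all non-null p-values. -/
def nullNonnullType {m : ℕ} (S₀ : Finset (Fin m)) : Option {j // j ∈ S₀} → Type
  | none => ({j : Fin m // j ∉ S₀} → ℝ)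
  | some _ => ℝ

def nullNonnullMS {m : ℕ} (S₀ : Finset (Fin m)) :
    ∀ o, MeasurableSpace (nullNonnullType S₀ o)
  | none => by unfold nullNonnullType; infer_instance
  | some _ => by unfold nullNonnullType; infer_instance

def nullNonnullFun {Ω : Type*} {m : ℕ} (S₀ : Finset (Fin m)) (p : Fin m → Ω → ℝ) :
    ∀ o : Option {j // j ∈ S₀}, Ω → nullNonnullType S₀ o
  | none => fun ω i => p i.1 ω
  | some j => p j.1

/-!
For a null `j`, let `R_j` be the step-up index computed after replacing `p_j` by `0`. The step-up
rule is stable under this change whenever `j` is rejected: then `R_j = R` and `p_j ≤ λ_R`, so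
`V / (R ∨ 1) ≤ ∑_{j ∈ S₀} 1{p_j ≤ λ_{R_j}} / R_j`. Since `R_j` is a function of the other
p-values only, it is independent of `p_j`, and super-uniformity gives
`E[1{p_j ≤ α R_j / m} / R_j] ≤ ∑_k P(R_j = k) (α k / m) / k ≤ α / m`.
Summing over the `m₀` nulls gives `m₀ α / m`.
-/

open Finset

noncomputable def countLE {m : ℕ} (q : Fin m → ℝ) (t : ℝ) : ℕ :=
  #{i | q i ≤ t}

section StepUp

variable {m : ℕ}

theorem sort_apply_le_iff_lt_countLE (q : Fin m → ℝ) (t : ℝ) (k : Fin m) :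
    q (Tuple.sort q k) ≤ t ↔ (k : ℕ) < countLE q t := by
  set σ := Tuple.sort q
  have hcount : countLE q t = #{k | q (σ k) ≤ t} := card_equiv σ.symm (by simp)
  have hdown : ∀ {k k'}, k' ≤ k → q (σ k) ≤ t → q (σ k') ≤ t :=
    fun h hk => (Tuple.monotone_sort q h).trans hk
  rw [hcount]
  constructor
  · intro hk
    have := card_le_card fun k' (hk' : k' ∈ Iic k) =>
      mem_filter.2 ⟨mem_univ k', hdown (mem_Iic.1 hk') hk⟩
    rw [Fin.card_Iic] at this
    omega
  · intro hk
    by_contra hkt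
    have := card_le_card fun k' (hk' : k' ∈ ({k | q (σ k) ≤ t} : Finset (Fin m))) =>
      mem_Iio.2 (lt_of_not_ge fun h => hkt (hdown h (mem_filter.1 hk').2))
    rw [Fin.card_Iio] at this
    omega

theorem stepUpIndex_eq_sup' (q : Fin m → ℝ) (lam : ℕ → ℝ) :
    stepUpIndex q lam = (range (m + 1)).sup' nonempty_range_add_one
      fun j => if j ≤ countLE q (lam j) then j else 0 := by
  set S := {j | 0 < j ∧ j ≤ m ∧ j ≤ countLE q (lam j)}
  have hS : {j | ∃ h : j - 1 < m, 0 < j ∧ q (Tuple.sort q ⟨j - 1, h⟩) ≤ lam j} = S := by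
    ext j
    simp only [Set.mem_ofPred_eq, sort_apply_le_iff_lt_countLE]
    constructor
    · rintro ⟨h, hj, hle⟩
      exact ⟨hj, by omega, by omega⟩
    · rintro ⟨hj, hjm, hle⟩
      exact ⟨by omega, hj, by omega⟩
  have hbdd : BddAbove S := ⟨m, fun j hj => hj.2.1⟩
  rw [stepUpIndex, hS]
  apply le_antisymm
  · rcases S.eq_empty_or_nonempty with h | h
    · rw [h, csSup_empty]
      exact Nat.zero_le _
    · obtain ⟨-, hm, hle⟩ := Nat.sSup_mem h hbdd
      exact le_sup'_of_le _ (show sSup S ∈ range (m + 1) from mem_range.2 (by omega))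
        (by rw [if_pos hle])
  · refine sup'_le _ _ fun j hj => ?_
    split_ifs with hle
    · rcases j.eq_zero_or_pos with rfl | hj0
      · exact Nat.zero_le _
      · exact le_csSup hbdd ⟨hj0, by rw [mem_range] at hj; omega, hle⟩
    · exact Nat.zero_le _

theorem stepUpIndex_le_countLE (q : Fin m → ℝ) (lam : ℕ → ℝ) :
    stepUpIndex q lam ≤ countLE q (lam (stepUpIndex q lam)) := by
  obtain ⟨j, -, hj⟩ := exists_mem_eq_sup' nonempty_range_add_one
    fun j => if j ≤ countLE q (lam j) then j else 0
  rw [← stepUpIndex_eq_sup'] at hj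
  rw [hj]
  split_ifs with hle
  · exact hle
  · exact Nat.zero_le _

theorem stepUpIndex_le (q : Fin m → ℝ) (lam : ℕ → ℝ) : stepUpIndex q lam ≤ m := by
  rw [stepUpIndex_eq_sup']
  exact sup'_le _ _ fun j hj => by split_ifs <;> simp only [mem_range] at hj <;> omega

theorem le_stepUpIndex {q : Fin m → ℝ} {lam : ℕ → ℝ} {j : ℕ} (hjm : j ≤ m)
    (hj : j ≤ countLE q (lam j)) : j ≤ stepUpIndex q lam := by
  rw [stepUpIndex_eq_sup']
  exact le_sup'_of_le _ (mem_range.2 (Nat.lt_succ_of_le hjm)) (by rw [if_pos hj])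

theorem stepUpIndex_pos_of_stepUpRejects {q : Fin m → ℝ} {lam : ℕ → ℝ} {i : Fin m}
    (h : stepUpRejects q lam i) : 0 < stepUpIndex q lam := by
  obtain ⟨k, -, hk⟩ := h
  exact Nat.zero_lt_of_lt hk

theorem le_lam_of_stepUpRejects {q : Fin m → ℝ} {lam : ℕ → ℝ} {i : Fin m}
    (h : stepUpRejects q lam i) : q i ≤ lam (stepUpIndex q lam) := by
  obtain ⟨k, rfl, hk⟩ := h
  exact (sort_apply_le_iff_lt_countLE q _ k).2 (hk.trans_le (stepUpIndex_le_countLE q lam))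

theorem countLE_le_countLE_update_zero (q : Fin m → ℝ) (j : Fin m) {t : ℝ} (ht : 0 ≤ t) :
    countLE q t ≤ countLE (Function.update q j 0) t := by
  refine card_le_card (monotone_filter_right _ fun i _ hi => ?_)
  rcases eq_or_ne i j with rfl | hij
  · simpa using ht
  · rwa [Function.update_of_ne hij]

theorem countLE_update_zero {q : Fin m → ℝ} {j : Fin m} {t : ℝ} (ht : 0 ≤ t) (hj : q j ≤ t) :
    countLE (Function.update q j 0) t = countLE q t := by
  refine congrArg card (filter_congr fun i _ => ?_)
  rcases eq_or_ne i j with rfl | hij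
  · simp [ht, hj]
  · rw [Function.update_of_ne hij]

theorem stepUpIndex_update_zero {q : Fin m → ℝ} {lam : ℕ → ℝ} (hmono : Monotone lam)
    (hnn : ∀ k, 0 ≤ lam k) {j : Fin m} (hj : q j ≤ lam (stepUpIndex q lam)) :
    stepUpIndex (Function.update q j 0) lam = stepUpIndex q lam := by
  have hle : stepUpIndex q lam ≤ stepUpIndex (Function.update q j 0) lam :=
    le_stepUpIndex (stepUpIndex_le q lam)
      ((stepUpIndex_le_countLE q lam).trans (countLE_le_countLE_update_zero q j (hnn _)))
  refine le_antisymm (le_stepUpIndex (stepUpIndex_le _ lam) ?_) hle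
  rw [← countLE_update_zero (hnn _) (hj.trans (hmono hle))]
  exact stepUpIndex_le_countLE _ lam

theorem measurable_countLE (t : ℝ) : Measurable fun q : Fin m → ℝ => countLE q t := by
  simp only [countLE, card_filter]
  exact Finset.measurable_sum _ fun i _ =>
    Measurable.ite (measurableSet_le (measurable_pi_apply i) measurable_const)
      measurable_const measurable_const

theorem measurable_stepUpIndex (lam : ℕ → ℝ) :
    Measurable fun q : Fin m → ℝ => stepUpIndex q lam := by
  simp_rw [stepUpIndex_eq_sup']
  exact Finset.measurable_range_sup'' fun j _ =>
    Measurable.ite (measurable_countLE _ measurableSet_Ici) measurable_const measurable_const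

end StepUp

theorem fdp_le_sum_ite_inv {m : ℕ} {lam : ℕ → ℝ} (hmono : Monotone lam) (hnn : ∀ k, 0 ≤ lam k)
    (S₀ : Finset (Fin m)) (q : Fin m → ℝ) :
    (Set.ncard {i | i ∈ S₀ ∧ stepUpRejects q lam i} : ℝ) / ((max (stepUpIndex q lam) 1 : ℕ) : ℝ)
      ≤ ∑ j ∈ S₀, if q j ≤ lam (stepUpIndex (Function.update q j 0) lam)
        then ((stepUpIndex (Function.update q j 0) lam : ℕ) : ℝ)⁻¹ else 0 := by
  classical
  have hV : {i | i ∈ S₀ ∧ stepUpRejects q lam i} = ↑{i ∈ S₀ | stepUpRejects q lam i} := by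
    ext
    simp
  rw [hV, Set.ncard_coe_finset, card_filter, Nat.cast_sum, sum_div]
  refine sum_le_sum fun j _ => ?_
  by_cases hrej : stepUpRejects q lam j
  · have hqj := le_lam_of_stepUpRejects hrej
    rw [stepUpIndex_update_zero hmono hnn hqj, if_pos hrej, if_pos hqj,
      max_eq_left (stepUpIndex_pos_of_stepUpRejects hrej), Nat.cast_one, one_div]
  · rw [if_neg hrej, Nat.cast_zero, zero_div]
    positivity

section NullBound

variable {Ω : Type*} [MeasurableSpace Ω] {μ : Measure Ω} {X : Ω → ℝ} {N : Ω → ℕ} {lam : ℕ → ℝ}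

theorem integrable_ite_inv [IsFiniteMeasure μ] (hX : Measurable X) (hN : Measurable N) :
    Integrable (fun ω => if X ω ≤ lam (N ω) then (N ω : ℝ)⁻¹ else 0) μ := by
  refine Integrable.of_bound (C := 1) (Measurable.aestronglyMeasurable ?_) (ae_of_all _ fun ω => ?_)
  · exact Measurable.ite (measurableSet_le hX (measurable_from_nat.comp hN))
      ((measurable_from_nat (f := fun k : ℕ => (k : ℝ)⁻¹)).comp hN) measurable_const
  · split_ifs
    · rcases (N ω).eq_zero_or_pos with h | h
      · simp [h]
      · rw [Real.norm_of_nonneg (by positivity)]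
        exact inv_le_one_of_one_le₀ (by exact_mod_cast h)
    · simp

-- `(0 : ℝ)⁻¹ = 0`, so the event `N = 0` contributes nothing.
theorem integral_ite_inv_le [IsProbabilityMeasure μ] (hX : Measurable X) (hN : Measurable N)
    (hind : IndepFun X N μ) {n : ℕ} (hNn : ∀ ω, N ω ≤ n) {c : ℝ} (hc : 0 ≤ c)
    (hlam : ∀ k ∈ Icc 1 n, μ {ω | X ω ≤ lam k} ≤ ENNReal.ofReal (c * k)) :
    ∫ ω, (if X ω ≤ lam (N ω) then (N ω : ℝ)⁻¹ else 0) ∂μ ≤ c := by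
  set A : ℕ → Set Ω := fun k => X ⁻¹' Set.Iic (lam k) ∩ N ⁻¹' {k}
  have hA : ∀ k, MeasurableSet (A k) :=
    fun k => (hX measurableSet_Iic).inter (hN (measurableSet_singleton k))
  have hsum : (fun ω => if X ω ≤ lam (N ω) then (N ω : ℝ)⁻¹ else 0)
      = fun ω => ∑ k ∈ range (n + 1), (A k).indicator (fun _ => (k : ℝ)⁻¹) ω := by
    funext ω
    rw [sum_eq_single_of_mem (N ω) (mem_range.2 (Nat.lt_succ_of_le (hNn ω)))]
    · by_cases h : X ω ≤ lam (N ω)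
      · rw [if_pos h, Set.indicator_of_mem (show ω ∈ A (N ω) from ⟨h, rfl⟩)]
      · rw [if_neg h, Set.indicator_of_notMem fun h' => h h'.1]
    · exact fun k _ hk => Set.indicator_of_notMem (fun h => hk h.2.symm) _
  have hterm : ∀ k ∈ range (n + 1), μ.real (A k) * (k : ℝ)⁻¹ ≤ c * μ.real (N ⁻¹' {k}) := by
    intro k hk
    rcases k.eq_zero_or_pos with rfl | hk0
    · simp only [CharP.cast_eq_zero, inv_zero, mul_zero]
      positivity
    have hXk : μ.real (X ⁻¹' Set.Iic (lam k)) ≤ c * k := ENNReal.toReal_le_of_le_ofReal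
      (by positivity) (hlam k (mem_Icc.2 ⟨hk0, Nat.lt_succ_iff.1 (mem_range.1 hk)⟩))
    have hprod : μ.real (A k) = μ.real (X ⁻¹' Set.Iic (lam k)) * μ.real (N ⁻¹' {k}) := by
      simp only [A, measureReal_def, hind.measure_inter_preimage_eq_mul _ _ measurableSet_Iic
        (measurableSet_singleton k), ENNReal.toReal_mul]
    have hk0' : (0 : ℝ) < k := by exact_mod_cast hk0
    calc μ.real (A k) * (k : ℝ)⁻¹
        ≤ c * k * μ.real (N ⁻¹' {k}) * (k : ℝ)⁻¹ := by rw [hprod]; gcongr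
      _ = c * μ.real (N ⁻¹' {k}) := by field_simp
  rw [hsum, integral_finsetSum _ fun k _ => (integrable_const _).indicator (hA k)]
  simp_rw [integral_indicator_const _ (hA _), smul_eq_mul]
  calc ∑ k ∈ range (n + 1), μ.real (A k) * (k : ℝ)⁻¹
      ≤ ∑ k ∈ range (n + 1), c * μ.real (N ⁻¹' {k}) := sum_le_sum hterm
    _ = c * μ.real (N ⁻¹' ↑(range (n + 1))) := by
      rw [← mul_sum, sum_measureReal_preimage_singleton _ fun k _ => hN (measurableSet_singleton k)]
    _ ≤ c := mul_le_of_le_one_right hc measureReal_le_one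

end NullBound

theorem indepFun_update_zero {Ω : Type*} [MeasurableSpace Ω] {μ : Measure Ω} {m : ℕ}
    {p : Fin m → Ω → ℝ} {S₀ : Finset (Fin m)} (hmeas : ∀ j, Measurable (p j))
    (hindep : @iIndepFun _ _ _ _ (nullNonnullMS S₀) (nullNonnullFun S₀ p) μ)
    {j : Fin m} (hj : j ∈ S₀) :
    IndepFun (p j) (fun ω => Function.update (fun i => p i ω) j 0) μ := by
  set M : Option {j // j ∈ S₀} → MeasurableSpace Ω :=
    fun o => (nullNonnullMS S₀ o).comap (nullNonnullFun S₀ p o)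
  set o₀ : Option {j // j ∈ S₀} := some ⟨j, hj⟩
  have hM : ∀ o, M o ≤ ‹MeasurableSpace Ω› := by
    rintro (_ | i)
    · exact Measurable.comap_le (measurable_pi_lambda _ fun i => hmeas i.1)
    · exact (hmeas i.1).comap_le
  have hsplit := indep_iSup_of_disjoint hM ((iIndepFun_iff_iIndep _ _ _).1 hindep)
    (S := {o₀}) (T := {o₀}ᶜ) disjoint_compl_right
  set mRest := ⨆ o ∈ ({o₀}ᶜ : Set _), M o
  have hrest : Measurable[mRest] fun ω => Function.update (fun i => p i ω) j 0 := by
    refine @measurable_pi_lambda _ _ _ mRest _ _ fun i => ?_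
    rcases eq_or_ne i j with rfl | hij
    · simp only [Function.update_self]
      exact @measurable_const _ _ _ mRest _
    simp only [Function.update_of_ne hij]
    by_cases hi : i ∈ S₀
    · have hle : M (some ⟨i, hi⟩) ≤ mRest :=
        le_iSup₂ (f := fun o _ => M o) (some ⟨i, hi⟩) (by simpa [o₀] using hij)
      exact (comap_measurable (p i)).mono hle le_rfl
    · have hle : M none ≤ mRest :=
        le_iSup₂ (f := fun o _ => M o) none (by simp [o₀])
      exact ((measurable_pi_apply (⟨i, hi⟩ : {j // j ∉ S₀})).comp
        (comap_measurable (nullNonnullFun S₀ p none))).mono hle le_rfl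
  rw [IndepFun_iff_Indep]
  refine indep_of_indep_of_le_right (indep_of_indep_of_le_left hsplit ?_) hrest.comap_le
  exact le_iSup₂ (f := fun o _ => M o) o₀ rfl

theorem stmt_5_general {Ω : Type*} [MeasureSpace Ω] [IsProbabilityMeasure (ℙ : Measure Ω)]
    {m : ℕ} (p : Fin m → Ω → ℝ) (S₀ : Finset (Fin m))
    (α : ℝ) (hα : α ∈ Set.Ioo (0 : ℝ) 1)
    (hmeas : ∀ j, Measurable (p j))
    (hnull : ∀ j ∈ S₀, ∀ t ∈ Set.Icc (0 : ℝ) 1,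
      ℙ {ω | p j ω ≤ t} ≤ ENNReal.ofReal t)
    (hindep : @iIndepFun _ _ _ _ (nullNonnullMS S₀) (nullNonnullFun S₀ p) ℙ)
    (lam : ℕ → ℝ) (hlam : ∀ j, lam j = α * j / m) :
    ∫ ω, ((Set.ncard {i : Fin m | i ∈ S₀ ∧ stepUpRejects (fun j => p j ω) lam i} : ℝ) /
        ((max (stepUpIndex (fun j => p j ω) lam) 1 : ℕ) : ℝ)) ∂ℙ ≤
      (S₀.card : ℝ) / m * α := by
  obtain ⟨hα0, hα1⟩ := hα
  have hmono : Monotone lam := fun a b hab => by simp only [hlam]; gcongr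
  have hnn : ∀ k, 0 ≤ lam k := fun k => by rw [hlam]; positivity
  have hsuper : ∀ j ∈ S₀, ∀ k ∈ Icc 1 m, ℙ {ω | p j ω ≤ lam k} ≤ ENNReal.ofReal (α / m * k) := by
    intro j hj k hk
    have hkm : (k : ℝ) / m ≤ 1 :=
      div_le_one_of_le₀ (by exact_mod_cast (mem_Icc.1 hk).2) (by positivity)
    have hlam_le : lam k ≤ 1 := by rw [hlam, mul_div_assoc]; nlinarith
    rw [div_mul_eq_mul_div, ← hlam]
    exact hnull j hj _ ⟨hnn k, hlam_le⟩
  set N : Fin m → Ω → ℕ := fun j ω => stepUpIndex (Function.update (fun i => p i ω) j 0) lam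
  set g : Fin m → Ω → ℝ := fun j ω => if p j ω ≤ lam (N j ω) then (N j ω : ℝ)⁻¹ else 0
  have hNmeas : ∀ j, Measurable (N j) := fun j => (measurable_stepUpIndex lam).comp
    ((measurable_update' (a := j)).comp ((measurable_pi_lambda _ hmeas).prodMk measurable_const))
  have hg : ∀ j, Integrable (g j) ℙ := fun j => integrable_ite_inv (hmeas j) (hNmeas j)
  have hnull_g : ∀ j ∈ S₀, ∫ ω, g j ω ≤ α / m := fun j hj =>
    integral_ite_inv_le (hmeas j) (hNmeas j)
      ((indepFun_update_zero hmeas hindep hj).comp measurable_id (measurable_stepUpIndex lam))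
      (fun ω => stepUpIndex_le _ lam) (by positivity) (hsuper j hj)
  calc _ ≤ ∫ ω, ∑ j ∈ S₀, g j ω :=
        integral_mono_of_nonneg (ae_of_all _ fun ω => by positivity)
          (integrable_finsetSum _ fun j _ => hg j)
          (ae_of_all _ fun ω => fdp_le_sum_ite_inv hmono hnn S₀ _)
    _ = ∑ j ∈ S₀, ∫ ω, g j ω := integral_finsetSum _ fun j _ => hg j
    _ ≤ ∑ _j ∈ S₀, α / m := sum_le_sum hnull_g
    _ = (S₀.card : ℝ) / m * α := by rw [sum_const, nsmul_eq_mul]; ring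

/-- Benjamini–Hochberg FDR control: if the null p-values are mutually independent,
independent of the non-null ones, and super uniform, then the BH step-up procedure with
thresholds `λ_j = αj/m` has FDR at most `(m₀/m)·α`. -/
theorem stmt_5 {Ω : Type*} [MeasureSpace Ω] [IsProbabilityMeasure (ℙ : Measure Ω)]
    {m : ℕ} (hm : 0 < m) (p : Fin m → Ω → ℝ) (S₀ : Finset (Fin m))
    (α : ℝ) (hα : α ∈ Set.Ioo (0 : ℝ) 1)
    (hmeas : ∀ j, Measurable (p j))
    (hrange : ∀ j ω, p j ω ∈ Set.Icc (0 : ℝ) 1)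
    (hnull : ∀ j ∈ S₀, ∀ t ∈ Set.Icc (0 : ℝ) 1,
      ℙ {ω | p j ω ≤ t} ≤ ENNReal.ofReal t)
    (hindep : @iIndepFun _ _ _ _ (nullNonnullMS S₀) (nullNonnullFun S₀ p) ℙ)
    (lam : ℕ → ℝ) (hlam : ∀ j, lam j = α * j / m) :
    ∫ ω, ((Set.ncard {i : Fin m | i ∈ S₀ ∧ stepUpRejects (fun j => p j ω) lam i} : ℝ) /
        ((max (stepUpIndex (fun j => p j ω) lam) 1 : ℕ) : ℝ)) ∂ℙ ≤
      (S₀.card : ℝ) / m * α :=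
  stmt_5_general p S₀ α hα hmeas hnull hindep lam hlam
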